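/- Iterated Divide-and-Intersect bound for the BEC: let P_e ∈ (0,1), ε ∈ (0,1), l ∈ ℕ and L = 2^l. Define P_e(0) = P_e and P_e(m+1) = (3/16)·P_e(m)². If d_min > ln(P_e(l)/8)/ln ε and μ_ε{y : |S_y| > L} > P_e(l), then μ_ε{y : |S_y| > 2L} ≥ (3/16)^{2L−1} · (μ_ε{y : |S_y| > 1})^{2L}. -/

import Mathlib

/-!
For `dim T = m + 1`, the events `{T ⊆ S_y}` are increasing and cover `{|S_y| > 2^m}`, and two
distinct ones occur together only when `dim S_y ≥ m + 2`, that is `|S_y| > 2^(m+1)`. The `d_min`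
hypothesis makes each of them have probability at most `P / 8`, where `P` is the probability of
the cover. Adding the events one at a time to a first family until its union has probability at
least `P / 2` (hence at most `5P / 8`), the union of the remaining events has probability at least
`3P / 8`, and Harris' inequality for these two increasing unions gives
`P(|S_y| > 2^(m+1)) ≥ (3/16) P²`. Iterating this doubling from list size `1` to `2L` gives the
bound.
-/

/-- The product Bernoulli(ε) measure of a set of erasure patterns `y : Fin N → Bool`:
each coordinate is independently `true` (erased) with probability `ε`. -/
noncomputable def prodMeas {N : ℕ} (ε : ℝ) (S : Set (Fin N → Bool)) : ℝ :=
  ∑ y : Fin N → Bool,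
    Set.indicator S (fun y => ∏ i, (if y i = true then ε else 1 - ε)) y

/-- The support `I_u` of the codeword `uG`: the positions where `uG` equals 1. -/
def Iu {K N : ℕ} (G : Matrix (Fin K) (Fin N) (ZMod 2)) (u : Fin K → ZMod 2) :
    Finset (Fin N) :=
  Finset.univ.filter (fun i => Matrix.vecMul u G i = 1)

/-- `E_u`: the event that the message `u` is compatible with the received word,
i.e., every position of `I_u` is erased. -/
def Eu {K N : ℕ} (G : Matrix (Fin K) (Fin N) (ZMod 2)) (u : Fin K → ZMod 2) :
    Set (Fin N → Bool) :=
  {y | ∀ i ∈ Iu G u, y i = true}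

/-- `S_y`: the set of messages compatible with the erasure pattern `y`,
i.e., whose codeword vanishes on all non-erased positions. -/
def Sy {K N : ℕ} (G : Matrix (Fin K) (Fin N) (ZMod 2)) (y : Fin N → Bool) :
    Set (Fin K → ZMod 2) :=
  {u | ∀ i, y i = false → Matrix.vecMul u G i = 0}

/-- The recursion P_e(0) = P_e, P_e(m+1) = (3/16) P_e(m)². -/
noncomputable def PeRec (Pe : ℝ) : ℕ → ℝ
  | 0 => Pe
  | m + 1 => 3 / 16 * (PeRec Pe m) ^ 2

open Finset Module

lemma IsUpperSet.monotone_indicator_one {α M : Type*} [Preorder α] [Zero M] [One M] [Preorder M]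
    [ZeroLEOneClass M] {U : Set α} (hU : IsUpperSet U) : Monotone (U.indicator (1 : α → M)) := by
  intro y z hyz
  by_cases hy : y ∈ U
  · simp [hy, hU hyz hy]
  · simp only [Set.indicator_of_notMem hy]
    exact Set.indicator_nonneg (fun _ _ => zero_le_one) z

section ErasureMeasure

variable {N : ℕ} {ε : ℝ}

noncomputable def erasureWeight (ε : ℝ) (y : Fin N → Bool) : ℝ :=
  ∏ i, if y i = true then ε else 1 - ε

lemma prodMeas_eq_sum_indicator (S : Set (Fin N → Bool)) :
    prodMeas ε S = ∑ y, S.indicator (erasureWeight ε) y := rfl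

lemma erasureWeight_nonneg (h0 : 0 ≤ ε) (h1 : ε ≤ 1) (y : Fin N → Bool) :
    0 ≤ erasureWeight ε y :=
  prod_nonneg fun i _ => by split_ifs <;> linarith

lemma prodMeas_nonneg (h0 : 0 ≤ ε) (h1 : ε ≤ 1) (S : Set (Fin N → Bool)) :
    0 ≤ prodMeas ε S :=
  sum_nonneg fun y _ => Set.indicator_nonneg (fun y _ => erasureWeight_nonneg h0 h1 y) y

lemma prodMeas_mono (h0 : 0 ≤ ε) (h1 : ε ≤ 1) {S T : Set (Fin N → Bool)} (h : S ⊆ T) :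
    prodMeas ε S ≤ prodMeas ε T :=
  sum_le_sum fun y _ =>
    Set.indicator_le_indicator_of_subset h (erasureWeight_nonneg h0 h1) y

lemma prodMeas_union_add_inter (S T : Set (Fin N → Bool)) :
    prodMeas ε (S ∪ T) + prodMeas ε (S ∩ T) = prodMeas ε S + prodMeas ε T := by
  simpa only [prodMeas_eq_sum_indicator, Pi.add_apply, sum_add_distrib] using
    congrArg (fun f => ∑ y, f y) (Set.indicator_union_add_inter (erasureWeight ε) S T)

lemma prodMeas_union_le (h0 : 0 ≤ ε) (h1 : ε ≤ 1) (S T : Set (Fin N → Bool)) :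
    prodMeas ε (S ∪ T) ≤ prodMeas ε S + prodMeas ε T := by
  linarith [prodMeas_union_add_inter (ε := ε) S T, prodMeas_nonneg h0 h1 (S ∩ T)]

@[simp]
lemma prodMeas_empty : prodMeas ε (∅ : Set (Fin N → Bool)) = 0 := by
  simp [prodMeas]

lemma prodMeas_setOf_forall_mem (t : Fin N → Finset Bool) :
    prodMeas ε {y | ∀ i, y i ∈ t i} = ∏ i, ∑ b ∈ t i, if b = true then ε else 1 - ε := by
  classical
  rw [prod_univ_sum, prodMeas_eq_sum_indicator]
  simp only [Set.indicator_apply, ← sum_filter]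
  congr 1
  ext y
  simp [Fintype.mem_piFinset]

lemma prodMeas_forall_mem_eq_true (J : Finset (Fin N)) :
    prodMeas ε {y | ∀ i ∈ J, y i = true} = ε ^ #J := by
  classical
  have h := prodMeas_setOf_forall_mem (ε := ε) fun i => if i ∈ J then {true} else univ
  convert h using 1
  · congr 1
    ext y
    exact ⟨fun hy i => by split_ifs with hi; exacts [by simp [hy i hi], by simp],
      fun hy i hi => by simpa [hi] using hy i⟩
  · have hsum : ∀ i, (∑ b ∈ if i ∈ J then {true} else univ, if b = true then ε else 1 - ε) =
        if i ∈ J then ε else 1 := by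
      intro i; split_ifs <;> simp
    simp only [hsum, prod_ite_mem, univ_inter, prod_const]

lemma sum_erasureWeight : ∑ y : Fin N → Bool, erasureWeight ε y = 1 := by
  simpa [prodMeas_eq_sum_indicator] using prodMeas_setOf_forall_mem (ε := ε) fun _ => univ

lemma erasureWeight_inf_mul_erasureWeight_sup (y z : Fin N → Bool) :
    erasureWeight ε (y ⊓ z) * erasureWeight ε (y ⊔ z) = erasureWeight ε y * erasureWeight ε z := by
  simp only [erasureWeight, ← prod_mul_distrib]
  refine prod_congr rfl fun i _ => ?_
  have key : ∀ a b : Bool, ((if a ⊓ b = true then ε else 1 - ε) *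
      if a ⊔ b = true then ε else 1 - ε) =
        (if a = true then ε else 1 - ε) * if b = true then ε else 1 - ε := by
    intro a b
    cases a <;> cases b <;> simp [mul_comm]
  exact key (y i) (z i)

lemma prodMeas_mul_le_prodMeas_inter (h0 : 0 ≤ ε) (h1 : ε ≤ 1) {U V : Set (Fin N → Bool)}
    (hU : IsUpperSet U) (hV : IsUpperSet V) :
    prodMeas ε U * prodMeas ε V ≤ prodMeas ε (U ∩ V) := by
  have hind : ∀ S : Set (Fin N → Bool), 0 ≤ S.indicator (1 : (Fin N → Bool) → ℝ) :=
    fun S => Set.indicator_nonneg fun _ _ => zero_le_one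
  have h := fkg _ _ _ (erasureWeight_nonneg h0 h1) (hind U) (hind V) hU.monotone_indicator_one
    hV.monotone_indicator_one fun y z => (erasureWeight_inf_mul_erasureWeight_sup y z).ge
  simp only [sum_erasureWeight, one_mul, ← Pi.mul_apply (U.indicator _),
    ← Set.inter_indicator_one] at h
  have weight_mul_indicator (S : Set (Fin N → Bool)) (y : Fin N → Bool) :
      erasureWeight ε y * S.indicator 1 y = S.indicator (erasureWeight ε) y := by
    by_cases hy : y ∈ S <;> simp [hy]
  simp only [weight_mul_indicator] at h
  exact h

end ErasureMeasure

section DivideAndIntersect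

variable {N : ℕ} {ε : ℝ}

lemma exists_subset_prodMeas_biUnion_mem_Icc (h0 : 0 ≤ ε) (h1 : ε ≤ 1) {ι : Type*}
    (A : ι → Set (Fin N → Bool)) {t δ : ℝ} (ht : 0 < t) (hA : ∀ j, prodMeas ε (A j) ≤ δ)
    (s : Finset ι) (hs : t ≤ prodMeas ε (⋃ j ∈ s, A j)) :
    ∃ s' ⊆ s, prodMeas ε (⋃ j ∈ s', A j) ∈ Set.Icc t (t + δ) := by
  classical
  induction s using Finset.induction_on with
  | empty =>
    simp only [notMem_empty, Set.iUnion_of_empty, Set.iUnion_empty, prodMeas_empty] at hs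
    linarith
  | insert j s _ ih =>
    by_cases hst : t ≤ prodMeas ε (⋃ i ∈ s, A i)
    · obtain ⟨s', hs', hmem⟩ := ih hst
      exact ⟨s', hs'.trans (subset_insert j s), hmem⟩
    · refine ⟨insert j s, subset_rfl, hs, ?_⟩
      have := prodMeas_union_le h0 h1 (A j) (⋃ i ∈ s, A i)
      rw [set_biUnion_insert]
      linarith [hA j]

lemma divide_and_intersect (h0 : 0 ≤ ε) (h1 : ε ≤ 1) {ι : Type*} [Fintype ι]
    (A : ι → Set (Fin N → Bool)) (B : Set (Fin N → Bool)) (hA : ∀ j, IsUpperSet (A j))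
    (hAB : Pairwise fun i j => A i ∩ A j ⊆ B) {a : ℝ} (ha : 0 < a)
    (haA : a ≤ prodMeas ε (⋃ j, A j)) (hA8 : ∀ j, prodMeas ε (A j) ≤ a / 8) :
    3 / 16 * a ^ 2 ≤ prodMeas ε B := by
  classical
  obtain ⟨s, -, hU_ge, hU_le⟩ := exists_subset_prodMeas_biUnion_mem_Icc h0 h1 A (half_pos ha)
    hA8 univ (by simp only [mem_univ, Set.iUnion_true]; linarith)
  set U := ⋃ j ∈ s, A j
  set V := ⋃ j ∈ sᶜ, A j
  have hcover : ⋃ j, A j ⊆ U ∪ V := by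
    intro y hy
    obtain ⟨j, hj⟩ := Set.mem_iUnion.1 hy
    by_cases hjs : j ∈ s
    · exact Or.inl (Set.mem_biUnion hjs hj)
    · exact Or.inr (Set.mem_biUnion (mem_compl.2 hjs) hj)
  have hV_ge : 3 / 8 * a ≤ prodMeas ε V := by
    linarith [prodMeas_mono h0 h1 hcover, prodMeas_union_le h0 h1 U V]
  have hUV : U ∩ V ⊆ B := by
    rintro y ⟨hyU, hyV⟩
    obtain ⟨i, hi, hyi⟩ := Set.mem_iUnion₂.1 hyU
    obtain ⟨j, hj, hyj⟩ := Set.mem_iUnion₂.1 hyV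
    exact hAB (ne_of_mem_of_not_mem hi (mem_compl.1 hj)) ⟨hyi, hyj⟩
  calc 3 / 16 * a ^ 2 = a / 2 * (3 / 8 * a) := by ring
    _ ≤ prodMeas ε U * prodMeas ε V :=
      mul_le_mul hU_ge hV_ge (by positivity) (prodMeas_nonneg h0 h1 U)
    _ ≤ prodMeas ε (U ∩ V) := prodMeas_mul_le_prodMeas_inter h0 h1
      (isUpperSet_iUnion₂ fun j _ => hA j) (isUpperSet_iUnion₂ fun j _ => hA j)
    _ ≤ prodMeas ε B := prodMeas_mono h0 h1 hUV

end DivideAndIntersect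

section Subspaces

variable {K V : Type*} [DivisionRing K] [AddCommGroup V] [Module K V]

lemma Submodule.exists_le_finrank_eq {S : Submodule K V} [FiniteDimensional K S] {n : ℕ}
    (hn : n ≤ finrank K S) : ∃ T ≤ S, finrank K T = n := by
  obtain ⟨f, hf⟩ := exists_linearIndependent_of_le_finrank hn
  refine ⟨span K (Set.range (S.subtype ∘ f)), ?_, ?_⟩
  · rw [span_le]
    rintro _ ⟨j, rfl⟩
    exact (f j).2
  · rw [finrank_span_eq_card (hf.map' S.subtype S.ker_subtype), Fintype.card_fin]

lemma Submodule.finrank_lt_finrank_sup_of_ne [FiniteDimensional K V] {T T' : Submodule K V}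
    (h : finrank K T = finrank K T') (hne : T ≠ T') : finrank K T < finrank K ↥(T ⊔ T') := by
  by_contra! hle
  exact hne ((eq_of_le_of_finrank_le le_sup_left hle).trans
    (eq_of_le_of_finrank_le le_sup_right (h ▸ hle)).symm)

end Subspaces

section Code

variable {K N : ℕ} (G : Matrix (Fin K) (Fin N) (ZMod 2))

def sySubmodule (y : Fin N → Bool) : Submodule (ZMod 2) (Fin K → ZMod 2) where
  carrier := Sy G y
  add_mem' {u v} hu hv i hi := by rw [Matrix.add_vecMul, Pi.add_apply, hu i hi, hv i hi, add_zero]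
  zero_mem' i _ := by rw [Matrix.zero_vecMul]; rfl
  smul_mem' c u hu i hi := by rw [Matrix.smul_vecMul, Pi.smul_apply, hu i hi, smul_zero]

lemma sySubmodule_mono {y z : Fin N → Bool} (h : y ≤ z) : sySubmodule G y ≤ sySubmodule G z :=
  fun _ hu i hi => hu i (Bool.eq_false_of_le_false (hi ▸ h i))

lemma ncard_Sy (y : Fin N → Bool) : (Sy G y).ncard = 2 ^ finrank (ZMod 2) (sySubmodule G y) := by
  rw [← Nat.card_coe_set_eq]
  show Nat.card (sySubmodule G y) = _
  rw [Module.natCard_eq_pow_finrank (K := ZMod 2), Nat.card_zmod]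

lemma two_pow_lt_ncard_Sy_iff {m : ℕ} {y : Fin N → Bool} :
    2 ^ m < (Sy G y).ncard ↔ m < finrank (ZMod 2) (sySubmodule G y) := by
  rw [ncard_Sy, Nat.pow_lt_pow_iff_right (by norm_num)]

noncomputable def listErrorProb (ε : ℝ) (L : ℕ) : ℝ :=
  prodMeas ε {y : Fin N → Bool | L < (Sy G y).ncard}

lemma listErrorProb_anti {ε : ℝ} (h0 : 0 ≤ ε) (h1 : ε ≤ 1) {L L' : ℕ} (h : L ≤ L') :
    listErrorProb G ε L' ≤ listErrorProb G ε L :=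
  prodMeas_mono h0 h1 fun _ hy => lt_of_le_of_lt h hy

def subspaceEvent (T : Submodule (ZMod 2) (Fin K → ZMod 2)) : Set (Fin N → Bool) :=
  {y | T ≤ sySubmodule G y}

lemma isUpperSet_subspaceEvent (T : Submodule (ZMod 2) (Fin K → ZMod 2)) :
    IsUpperSet (subspaceEvent G T) :=
  fun _ _ h hy => hy.trans (sySubmodule_mono G h)

lemma subspaceEvent_subset_Eu {T : Submodule (ZMod 2) (Fin K → ZMod 2)} {u : Fin K → ZMod 2}
    (hu : u ∈ T) : subspaceEvent G T ⊆ Eu G u := by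
  intro y hy i hi
  by_contra h
  have h0 := hy hu i (by simpa using h)
  simp [Iu, h0] at hi

lemma setOf_two_pow_lt_ncard_Sy_eq_iUnion (m : ℕ) :
    {y : Fin N → Bool | 2 ^ m < (Sy G y).ncard} =
      ⋃ T : {T : Submodule (ZMod 2) (Fin K → ZMod 2) // finrank (ZMod 2) T = m + 1},
        subspaceEvent G T := by
  ext y
  simp only [Set.mem_ofPred_eq, Set.mem_iUnion, two_pow_lt_ncard_Sy_iff]
  constructor
  · intro h
    obtain ⟨T, hT, hdim⟩ := Submodule.exists_le_finrank_eq h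
    exact ⟨⟨T, hdim⟩, hT⟩
  · rintro ⟨⟨T, hdim⟩, hT⟩
    have := Submodule.finrank_mono (show T ≤ _ from hT)
    omega

lemma subspaceEvent_inter_subset {m : ℕ} {T T' : Submodule (ZMod 2) (Fin K → ZMod 2)}
    (hT : finrank (ZMod 2) T = m + 1) (hT' : finrank (ZMod 2) T' = m + 1) (hne : T ≠ T') :
    subspaceEvent G T ∩ subspaceEvent G T' ⊆ {y | 2 ^ (m + 1) < (Sy G y).ncard} := by
  rintro y ⟨hy, hy'⟩
  rw [Set.mem_ofPred_eq, two_pow_lt_ncard_Sy_iff]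
  calc m + 1 = finrank (ZMod 2) T := hT.symm
    _ < finrank (ZMod 2) ↥(T ⊔ T') :=
      Submodule.finrank_lt_finrank_sup_of_ne (hT.trans hT'.symm) hne
    _ ≤ _ := Submodule.finrank_mono (sup_le hy hy')

lemma listErrorProb_step {ε : ℝ} (h0 : 0 ≤ ε) (h1 : ε ≤ 1) (m : ℕ)
    (hpos : 0 < listErrorProb G ε (2 ^ m))
    (hsmall : ∀ u ≠ 0, ε ^ #(Iu G u) ≤ listErrorProb G ε (2 ^ m) / 8) :
    3 / 16 * listErrorProb G ε (2 ^ m) ^ 2 ≤ listErrorProb G ε (2 ^ (m + 1)) := by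
  let ι := {T : Submodule (ZMod 2) (Fin K → ZMod 2) // finrank (ZMod 2) T = m + 1}
  have : Fintype ι := Fintype.ofFinite ι
  refine divide_and_intersect h0 h1 (fun T : ι => subspaceEvent G T) _
    (fun T => isUpperSet_subspaceEvent G T)
    (fun T T' hne => subspaceEvent_inter_subset G T.2 T'.2 (Subtype.coe_injective.ne hne)) hpos
    (by rw [listErrorProb, setOf_two_pow_lt_ncard_Sy_eq_iUnion]) ?_
  rintro ⟨T, hT⟩
  obtain ⟨u, huT, hu0⟩ :=
    Submodule.exists_mem_ne_zero_of_ne_bot (p := T) (by rintro rfl; simp at hT)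
  calc prodMeas ε (subspaceEvent G T) ≤ prodMeas ε (Eu G u) :=
        prodMeas_mono h0 h1 (subspaceEvent_subset_Eu G huT)
    _ = ε ^ #(Iu G u) := prodMeas_forall_mem_eq_true _
    _ ≤ _ := hsmall u hu0

end Code

lemma pow_lt_of_log_div_log_lt {ε x : ℝ} {n : ℕ} (hε0 : 0 < ε) (hε1 : ε < 1) (hx : 0 < x)
    (h : Real.log x / Real.log ε < n) : ε ^ n < x := by
  rw [div_lt_iff_of_neg (Real.log_neg hε0 hε1), ← Real.log_pow] at h
  exact (Real.log_lt_log_iff (by positivity) hx).1 h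

lemma pow_mul_pow_le_of_forall_mul_sq_le {a : ℕ → ℝ} {c : ℝ} {n : ℕ} (hc : 0 < c) (ha0 : 0 ≤ a 0)
    (h : ∀ m < n, c * a m ^ 2 ≤ a (m + 1)) : c ^ (2 ^ n - 1) * a 0 ^ 2 ^ n ≤ a n := by
  have key : ∀ k ≤ n, (c * a 0) ^ 2 ^ k ≤ c * a k := by
    intro k hk
    induction k with
    | zero => simp
    | succ k ih =>
      calc (c * a 0) ^ 2 ^ (k + 1) = ((c * a 0) ^ 2 ^ k) ^ 2 := by rw [pow_succ, pow_mul]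
        _ ≤ (c * a k) ^ 2 := pow_le_pow_left₀ (by positivity) (ih (by omega)) 2
        _ = c * (c * a k ^ 2) := by ring
        _ ≤ c * a (k + 1) := mul_le_mul_of_nonneg_left (h k (by omega)) hc.le
  refine le_of_mul_le_mul_right ?_ hc
  calc c ^ (2 ^ n - 1) * a 0 ^ 2 ^ n * c = (c * a 0) ^ 2 ^ n := by
        rw [mul_pow, ← pow_sub_one_mul (by positivity : 2 ^ n ≠ 0) c]; ring
    _ ≤ c * a n := key n le_rfl
    _ = a n * c := mul_comm _ _

lemma PeRec_pos {Pe : ℝ} (h : 0 < Pe) : ∀ m, 0 < PeRec Pe m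
  | 0 => h
  | m + 1 => by
    have := PeRec_pos h m
    rw [PeRec]
    positivity

theorem DI_bound_BEC_iterated_general (K N : ℕ) (G : Matrix (Fin K) (Fin N) (ZMod 2))
    (ε : ℝ) (hε0 : 0 < ε) (hε1 : ε < 1) (Pe : ℝ) (hPe0 : 0 < Pe)
    (l : ℕ) (L : ℕ) (hL : L = 2 ^ l)
    (hdmin : ∀ u : Fin K → ZMod 2, u ≠ 0 →
      Real.log (PeRec Pe l / 8) / Real.log ε < ((Iu G u).card : ℝ))
    (hbig : prodMeas ε {y : Fin N → Bool | L < (Sy G y).ncard} > PeRec Pe l) :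
    prodMeas ε {y : Fin N → Bool | 2 * L < (Sy G y).ncard}
      ≥ (3 / 16) ^ (2 * L - 1)
          * (prodMeas ε {y : Fin N → Bool | 1 < (Sy G y).ncard}) ^ (2 * L) := by
  subst hL
  set a : ℕ → ℝ := fun m => listErrorProb G ε (2 ^ m)
  have hPl := PeRec_pos hPe0 l
  have hbig' : PeRec Pe l < a l := hbig
  have hstep : ∀ m < l + 1, 3 / 16 * a m ^ 2 ≤ a (m + 1) := by
    intro m hm
    have hal : a l ≤ a m :=
      listErrorProb_anti G hε0.le hε1.le (Nat.pow_le_pow_right two_pos (by omega))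
    refine listErrorProb_step G hε0.le hε1.le m (by linarith) fun u hu => ?_
    linarith [pow_lt_of_log_div_log_lt hε0 hε1 (by positivity) (hdmin u hu)]
  have h := pow_mul_pow_le_of_forall_mul_sq_le (by norm_num) (prodMeas_nonneg hε0.le hε1.le _)
    hstep
  rw [← pow_succ']
  simpa [a, listErrorProb] using h

/-- Iterated Divide-and-Intersect bound for the BEC. -/
theorem DI_bound_BEC_iterated (K N : ℕ) (G : Matrix (Fin K) (Fin N) (ZMod 2))
    (ε : ℝ) (hε0 : 0 < ε) (hε1 : ε < 1) (Pe : ℝ) (hPe0 : 0 < Pe) (hPe1 : Pe < 1)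
    (l : ℕ) (L : ℕ) (hL : L = 2 ^ l)
    (hdmin : ∀ u : Fin K → ZMod 2, u ≠ 0 →
      Real.log (PeRec Pe l / 8) / Real.log ε < ((Iu G u).card : ℝ))
    (hbig : prodMeas ε {y : Fin N → Bool | L < (Sy G y).ncard} > PeRec Pe l) :
    prodMeas ε {y : Fin N → Bool | 2 * L < (Sy G y).ncard}
      ≥ (3 / 16) ^ (2 * L - 1)
          * (prodMeas ε {y : Fin N → Bool | 1 < (Sy G y).ncard}) ^ (2 * L) :=
  DI_bound_BEC_iterated_general K N G ε hε0 hε1 Pe hPe0 l L hL hdmin hbig
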